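/- Let M be a smooth n-manifold and σ, ν : M → ℝ^{n+2} smooth maps with ⟨σ(p),σ(p)⟩ = −1, σ(p)_{n+2} > 0, ⟨ν(p),ν(p)⟩ = 1 and ⟨σ(p),ν(p)⟩ = 0 for all p ∈ M. Assume that ζ = (σ,ν) : M → ℝ^{n+2} × ℝ^{n+2} has injective differential at every point of M and is orthogonal to the generator of the geodesic flow, i.e. ⟨d_pσ(v), ν(p)⟩ = ⟨d_pν(v), σ(p)⟩ for all p ∈ M and v ∈ T_pM. If at a point p ∈ M the differential d_pσ is not injective, then there exists ε > 0 such that for every t with 0 < |t| < ε, the linear map cosh(t)·d_pσ + sinh(t)·d_pν : T_pM → ℝ^{n+2} is injective. -/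

import Mathlib

/-!
Write `A = d_pσ` and `B = d_pν`. Differentiating `⟨σ, ν⟩ = 0` and using the orthogonality
hypothesis gives `⟨dσ(·), ν⟩ ≡ 0` and `⟨dν(·), σ⟩ ≡ 0`; differentiating the former once more and
using the symmetry of second derivatives gives `⟨A u, B w⟩ = ⟨A w, B u⟩`. Hence if
`A v + λ B v = 0` and `A w + μ B w = 0` with `λ ≠ μ`, then `B v ⊥ B w`. These vectors are nonzero
since `ζ` is an immersion, and lie in `σ(p)^⊥`, on which the Minkowski form is positive definite,
so only finitely many `λ` make `A + λ B` non-injective. As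
`cosh t • A + sinh t • B = cosh t • (A + tanh t • B)`, the bad times `t ≠ 0` form a finite set,
which stays away from `0`.
-/

open scoped Manifold

/-- The Minkowski bilinear form on `ℝ^{n+2}`:
`⟨x,y⟩ = x₁y₁ + ⋯ + x_{n+1}y_{n+1} − x_{n+2}y_{n+2}`. -/
noncomputable def mink (n : ℕ) (x y : Fin (n + 2) → ℝ) : ℝ :=
  (∑ i : Fin (n + 1), x i.castSucc * y i.castSucc) -
    x (Fin.last (n + 1)) * y (Fin.last (n + 1))

open Function Topology

section Pencil

variable {K E V : Type*} [Field K] [AddCommGroup E] [Module K E] [AddCommGroup V] [Module K V]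

def pencilSingularSet (A B : E →ₗ[K] V) : Set K := {c | ∃ v ≠ 0, A v + c • B v = 0}

variable {b : LinearMap.BilinForm K V} {A B : E →ₗ[K] V}

lemma pencil_kernels_orthogonal (hb : b.IsSymm) (hAB : ∀ u w, b (A u) (B w) = b (A w) (B u))
    {c d : K} {v w : E} (hv : A v + c • B v = 0) (hw : A w + d • B w = 0) (hcd : c ≠ d) :
    b (B v) (B w) = 0 := by
  have h := hAB v w
  rw [eq_neg_of_add_eq_zero_left hv, eq_neg_of_add_eq_zero_left hw] at h
  simp only [map_neg, map_smul, LinearMap.neg_apply, LinearMap.smul_apply, smul_eq_mul,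
    hb.eq (B w)] at h
  exact (mul_eq_zero.1 (by linear_combination h : (d - c) * b (B v) (B w) = 0)).resolve_left
    (sub_ne_zero.2 hcd.symm)

-- Kernel vectors for distinct parameters have pairwise orthogonal, anisotropic images under `B`,
-- and a finite-dimensional space holds no infinite such family.
theorem finite_pencilSingularSet [FiniteDimensional K V] (hb : b.IsSymm)
    (hAB : ∀ u w, b (A u) (B w) = b (A w) (B u))
    (haniso : ∀ u, B u ≠ 0 → b (B u) (B u) ≠ 0)
    (hinj : ∀ u, A u = 0 → B u = 0 → u = 0) :
    (pencilSingularSet A B).Finite := by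
  by_contra hinf
  have : Infinite (pencilSingularSet A B) := Set.infinite_coe_iff.2 hinf
  choose v hv0 hv using fun c : pencilSingularSet A B => c.2
  have hBv : ∀ c, B (v c) ≠ 0 := fun c hB =>
    hv0 c (hinj _ (by simpa [hB] using hv c) hB)
  refine Module.Finite.not_linearIndependent_of_infinite (R := K) (fun c => B (v c))
    (LinearMap.BilinForm.linearIndependent_of_iIsOrtho (B := b) ?_ fun c => haniso _ (hBv c))
  intro c d hcd
  exact pencil_kernels_orthogonal hb hAB (hv c) (hv d) (Subtype.coe_injective.ne hcd)

end Pencil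

theorem exists_pos_injective_cosh_smul_add_sinh_smul {E V : Type*} [AddCommGroup E] [Module ℝ E]
    [AddCommGroup V] [Module ℝ V] {A B : E →ₗ[ℝ] V}
    (hfin : (pencilSingularSet A B).Finite) :
    ∃ ε > 0, ∀ t : ℝ, 0 < |t| → |t| < ε →
      Injective fun v => Real.cosh t • A v + Real.sinh t • B v := by
  have hclosed : IsClosed (Real.tanh ⁻¹' pencilSingularSet A B \ {0}) :=
    (hfin.preimage Real.tanh_injective.injOn).sdiff.isClosed
  obtain ⟨ε, hε, hball⟩ := Metric.mem_nhds_iff.1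
    (hclosed.isOpen_compl.mem_nhds fun h => h.2 rfl)
  refine ⟨ε, hε, fun t ht htε => ?_⟩
  have hgood : Real.tanh t ∉ pencilSingularSet A B := fun hbad =>
    hball (by simpa using htε) ⟨hbad, by simpa using ht⟩
  refine (injective_iff_map_eq_zero (Real.cosh t • A + Real.sinh t • B)).2 fun v hv => ?_
  by_contra hv0
  refine hgood ⟨v, hv0, ?_⟩
  rw [Real.tanh_eq_sinh_div_cosh, div_eq_inv_mul, mul_smul,
    ← inv_smul_smul₀ (Real.cosh_pos t).ne' (A v), ← smul_add]
  simp only [LinearMap.add_apply, LinearMap.smul_apply] at hv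
  rw [hv, smul_zero]

theorem ContinuousLinearMap.fderiv_of_bilinear_apply_eq_zero {𝕜 E F₁ F₂ G : Type*}
    [NontriviallyNormedField 𝕜] [NormedAddCommGroup E] [NormedSpace 𝕜 E]
    [NormedAddCommGroup F₁] [NormedSpace 𝕜 F₁] [NormedAddCommGroup F₂] [NormedSpace 𝕜 F₂]
    [NormedAddCommGroup G] [NormedSpace 𝕜 G] (b : F₁ →L[𝕜] F₂ →L[𝕜] G)
    {f : E → F₁} {g : E → F₂} {x : E} {c : G} (hf : DifferentiableAt 𝕜 f x)
    (hg : DifferentiableAt 𝕜 g x) (h : ∀ᶠ y in 𝓝 x, b (f y) (g y) = c) (u : E) :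
    b (fderiv 𝕜 f x u) (g x) + b (f x) (fderiv 𝕜 g x u) = 0 := by
  have hderiv := b.fderiv_of_bilinear hf hg
  rw [Filter.EventuallyEq.fderiv_eq (f := fun _ => c) h, fderiv_const_apply] at hderiv
  simpa [add_comm] using (congrArg (· u) hderiv).symm

section BilinearCalculus

variable {E V : Type*} [NormedAddCommGroup E] [NormedSpace ℝ E] [NormedAddCommGroup V]
  [NormedSpace ℝ V] {b : V →L[ℝ] V →L[ℝ] ℝ} {F G : E → V} {x₀ : E}

theorem eventually_bilinear_fderiv_apply_eq_zero (hb : ∀ x y, b x y = b y x)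
    (hF : ∀ᶠ x in 𝓝 x₀, DifferentiableAt ℝ F x) (hG : ∀ᶠ x in 𝓝 x₀, DifferentiableAt ℝ G x)
    (hFG : ∀ᶠ x in 𝓝 x₀, b (F x) (G x) = 0)
    (horth : ∀ᶠ x in 𝓝 x₀, ∀ u, b (fderiv ℝ F x u) (G x) = b (fderiv ℝ G x u) (F x)) :
    ∀ᶠ x in 𝓝 x₀, ∀ u, b (fderiv ℝ F x u) (G x) = 0 := by
  filter_upwards [hF, hG, hFG.eventually_nhds, horth] with x hFx hGx hFGx hx u
  have := b.fderiv_of_bilinear_apply_eq_zero hFx hGx hFGx u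
  rw [hb (F x), ← hx u] at this
  linarith

-- Differentiate `b (F' u) G = 0` in the direction `w` and use the symmetry of `F''`.
theorem bilinear_fderiv_comm_of_eventually_eq_zero (hF : ContDiffAt ℝ 2 F x₀)
    (hG : DifferentiableAt ℝ G x₀) (h : ∀ᶠ x in 𝓝 x₀, ∀ u, b (fderiv ℝ F x u) (G x) = 0)
    (u w : E) :
    b (fderiv ℝ F x₀ u) (fderiv ℝ G x₀ w) = b (fderiv ℝ F x₀ w) (fderiv ℝ G x₀ u) := by
  have hF' : DifferentiableAt ℝ (fderiv ℝ F) x₀ :=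
    (hF.fderiv_right (m := 1) le_rfl).differentiableAt one_ne_zero
  have hsnd : ∀ u w, b (fderiv ℝ (fderiv ℝ F) x₀ w u) (G x₀) +
      b (fderiv ℝ F x₀ u) (fderiv ℝ G x₀ w) = 0 := fun u w => by
    have := b.fderiv_of_bilinear_apply_eq_zero (hF'.clm_apply (differentiableAt_const u)) hG
      (h.mono fun x hx => hx u) w
    simpa [fderiv_clm_apply hF' (differentiableAt_const u)] using this
  have hswap := hsnd w u
  rw [hF.isSymmSndFDerivAt (by simp [minSmoothness_of_isRCLikeNormedField]) u w] at hswap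
  linarith [hsnd u w]

end BilinearCalculus

section Chart

variable {E V M : Type*} [NormedAddCommGroup E] [NormedSpace ℝ E] [NormedAddCommGroup V]
  [NormedSpace ℝ V] [TopologicalSpace M] [ChartedSpace E M] {f : M → V} {p : M}

lemma mfderiv_eq_fderiv_comp_extChartAt_symm (hf : MDifferentiableAt 𝓘(ℝ, E) 𝓘(ℝ, V) f p) :
    mfderiv 𝓘(ℝ, E) 𝓘(ℝ, V) f p =
      fderiv ℝ (f ∘ (extChartAt 𝓘(ℝ, E) p).symm) (extChartAt 𝓘(ℝ, E) p p) := by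
  rw [hf.mfderiv]
  simp only [writtenInExtChartAt, extChartAt_model_space_eq_id, PartialEquiv.refl_coe,
    CompTriple.comp_eq, modelWithCornersSelf_coe, Set.range_id, fderivWithin_univ]
  rfl

lemma fderiv_comp_extChartAt_symm_apply [IsManifold 𝓘(ℝ, E) 1 M] {x : E}
    (hx : x ∈ (extChartAt 𝓘(ℝ, E) p).target)
    (hf : MDifferentiableAt 𝓘(ℝ, E) 𝓘(ℝ, V) f ((extChartAt 𝓘(ℝ, E) p).symm x)) (u : E) :
    fderiv ℝ (f ∘ (extChartAt 𝓘(ℝ, E) p).symm) x u =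
      mfderiv 𝓘(ℝ, E) 𝓘(ℝ, V) f ((extChartAt 𝓘(ℝ, E) p).symm x)
        (mfderiv 𝓘(ℝ, E) 𝓘(ℝ, E) (extChartAt 𝓘(ℝ, E) p).symm x u) := by
  have hsymm : MDifferentiableAt 𝓘(ℝ, E) 𝓘(ℝ, E) (extChartAt 𝓘(ℝ, E) p).symm x :=
    ((contMDiffOn_extChartAt_symm (n := 1) p).mdifferentiableOn one_ne_zero).mdifferentiableAt
      (extChartAt_target_mem_nhds' hx)
  rw [← mfderiv_eq_fderiv, mfderiv_comp x hf hsymm]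
  rfl

lemma MDifferentiableAt.differentiableAt_comp_extChartAt_symm
    (hf : MDifferentiableAt 𝓘(ℝ, E) 𝓘(ℝ, V) f p) :
    DifferentiableAt ℝ (f ∘ (extChartAt 𝓘(ℝ, E) p).symm) (extChartAt 𝓘(ℝ, E) p p) := by
  simpa only [writtenInExtChartAt, extChartAt_model_space_eq_id, PartialEquiv.refl_coe,
    CompTriple.comp_eq, modelWithCornersSelf_coe, Set.range_id, differentiableWithinAt_univ]
    using hf.differentiableWithinAt_writtenInExtChartAt

lemma mfderiv_prodMk_space_apply {W : Type*} [NormedAddCommGroup W] [NormedSpace ℝ W]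
    {g : M → W} (hf : MDifferentiableAt 𝓘(ℝ, E) 𝓘(ℝ, V) f p)
    (hg : MDifferentiableAt 𝓘(ℝ, E) 𝓘(ℝ, W) g p) (u : E) :
    mfderiv 𝓘(ℝ, E) 𝓘(ℝ, V × W) (fun q => (f q, g q)) p u =
      (mfderiv 𝓘(ℝ, E) 𝓘(ℝ, V) f p u, mfderiv 𝓘(ℝ, E) 𝓘(ℝ, W) g p u) := by
  rw [mfderiv_eq_fderiv_comp_extChartAt_symm (hf.prodMk_space hg),
    mfderiv_eq_fderiv_comp_extChartAt_symm hf, mfderiv_eq_fderiv_comp_extChartAt_symm hg]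
  exact DFunLike.congr_fun (hf.differentiableAt_comp_extChartAt_symm.fderiv_prodMk
    hg.differentiableAt_comp_extChartAt_symm) u

lemma ContMDiff.contDiffOn_comp_extChartAt_symm {n : WithTop ℕ∞} [IsManifold 𝓘(ℝ, E) n M]
    {f : M → V} (hf : ContMDiff 𝓘(ℝ, E) 𝓘(ℝ, V) n f) (p : M) :
    ContDiffOn ℝ n (f ∘ (extChartAt 𝓘(ℝ, E) p).symm) (extChartAt 𝓘(ℝ, E) p).target :=
  (hf.comp_contMDiffOn (contMDiffOn_extChartAt_symm p)).contDiffOn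

lemma ContMDiff.contDiffAt_comp_extChartAt_symm {n : WithTop ℕ∞} [IsManifold 𝓘(ℝ, E) n M]
    {f : M → V} (hf : ContMDiff 𝓘(ℝ, E) 𝓘(ℝ, V) n f) (p : M) :
    ContDiffAt ℝ n (f ∘ (extChartAt 𝓘(ℝ, E) p).symm) (extChartAt 𝓘(ℝ, E) p p) :=
  (hf.contDiffOn_comp_extChartAt_symm p).contDiffAt (extChartAt_target_mem_nhds p)

end Chart

section Orthogonal

variable {E V M : Type*} [NormedAddCommGroup E] [NormedSpace ℝ E] [NormedAddCommGroup V]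
  [NormedSpace ℝ V] [TopologicalSpace M] [ChartedSpace E M] [IsManifold 𝓘(ℝ, E) 2 M]
  {b : V →L[ℝ] V →L[ℝ] ℝ} {σ ν : M → V}
  (hb : ∀ x y, b x y = b y x) (hσ : ContMDiff 𝓘(ℝ, E) 𝓘(ℝ, V) 2 σ)
  (hν : ContMDiff 𝓘(ℝ, E) 𝓘(ℝ, V) 1 ν) (hσν : ∀ q, b (σ q) (ν q) = 0)
  (horth : ∀ q v, b (mfderiv 𝓘(ℝ, E) 𝓘(ℝ, V) σ q v) (ν q) =
    b (mfderiv 𝓘(ℝ, E) 𝓘(ℝ, V) ν q v) (σ q))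
include hb hσ hν hσν horth

theorem eventually_bilinear_fderiv_chart_eq_zero (p : M) :
    ∀ᶠ x in 𝓝 (extChartAt 𝓘(ℝ, E) p p), ∀ u, b (fderiv ℝ (σ ∘ (extChartAt 𝓘(ℝ, E) p).symm) x u)
      ((ν ∘ (extChartAt 𝓘(ℝ, E) p).symm) x) = 0 := by
  set e := extChartAt 𝓘(ℝ, E) p
  have htarget : ∀ᶠ x in 𝓝 (e p), x ∈ e.target := extChartAt_target_mem_nhds p
  have hdiff : ∀ {f : M → V}, ContMDiff 𝓘(ℝ, E) 𝓘(ℝ, V) 1 f →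
      ∀ᶠ x in 𝓝 (e p), DifferentiableAt ℝ (f ∘ e.symm) x := fun hf =>
    htarget.mono fun x hx => ((hf.contDiffOn_comp_extChartAt_symm p).differentiableOn
      one_ne_zero x hx).differentiableAt (extChartAt_target_mem_nhds' hx)
  refine eventually_bilinear_fderiv_apply_eq_zero hb (hdiff (hσ.of_le one_le_two)) (hdiff hν)
    (.of_forall fun x => hσν _) (htarget.mono fun x hx u => ?_)
  rw [fderiv_comp_extChartAt_symm_apply hx (hσ.mdifferentiableAt two_ne_zero),
    fderiv_comp_extChartAt_symm_apply hx (hν.mdifferentiableAt one_ne_zero)]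
  exact horth _ _

theorem bilinear_apply_mfderiv_eq_zero (p : M) (u : E) :
    b (σ p) (mfderiv 𝓘(ℝ, E) 𝓘(ℝ, V) ν p u) = 0 := by
  have hchart := eventually_bilinear_fderiv_chart_eq_zero hb hσ hν hσν horth p
  have hleibniz := b.fderiv_of_bilinear_apply_eq_zero
    ((hσ.contDiffAt_comp_extChartAt_symm p).differentiableAt two_ne_zero)
    ((hν.contDiffAt_comp_extChartAt_symm p).differentiableAt one_ne_zero)
    (.of_forall fun _ => hσν _) u
  rw [hchart.self_of_nhds u, zero_add, comp_apply, extChartAt_to_inv] at hleibniz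
  rwa [mfderiv_eq_fderiv_comp_extChartAt_symm (hν.mdifferentiableAt one_ne_zero)]

theorem bilinear_mfderiv_comm (p : M) (u w : E) :
    b (mfderiv 𝓘(ℝ, E) 𝓘(ℝ, V) σ p u) (mfderiv 𝓘(ℝ, E) 𝓘(ℝ, V) ν p w) =
      b (mfderiv 𝓘(ℝ, E) 𝓘(ℝ, V) σ p w) (mfderiv 𝓘(ℝ, E) 𝓘(ℝ, V) ν p u) := by
  rw [mfderiv_eq_fderiv_comp_extChartAt_symm (hσ.mdifferentiableAt two_ne_zero),
    mfderiv_eq_fderiv_comp_extChartAt_symm (hν.mdifferentiableAt one_ne_zero)]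
  exact bilinear_fderiv_comm_of_eventually_eq_zero
    (hσ.contDiffAt_comp_extChartAt_symm p)
    ((hν.contDiffAt_comp_extChartAt_symm p).differentiableAt one_ne_zero)
    (eventually_bilinear_fderiv_chart_eq_zero hb hσ hν hσν horth p) u w

end Orthogonal

section Minkowski

variable {n : ℕ}

-- Built so that `minkL n x y` is `mink n x y` by `rfl`: facts about `mink` apply to it unchanged.
noncomputable def minkL (n : ℕ) : (Fin (n + 2) → ℝ) →L[ℝ] (Fin (n + 2) → ℝ) →L[ℝ] ℝ :=
  LinearMap.toContinuousLinearMap <| LinearMap.toContinuousLinearMap.toLinearMap ∘ₗ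
    LinearMap.mk₂ ℝ (mink n)
      (fun x x' y => by simp only [mink, Pi.add_apply, add_mul, Finset.sum_add_distrib]; ring)
      (fun c x y => by
        simp only [mink, Pi.smul_apply, smul_eq_mul, mul_sub, Finset.mul_sum, mul_assoc])
      (fun x y y' => by simp only [mink, Pi.add_apply, mul_add, Finset.sum_add_distrib]; ring)
      (fun c x y => by
        simp only [mink, Pi.smul_apply, smul_eq_mul, mul_sub, Finset.mul_sum, mul_left_comm c])

lemma mink_comm (x y : Fin (n + 2) → ℝ) : mink n x y = mink n y x := by
  simp [mink, mul_comm]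

-- Cauchy–Schwarz on the first `n + 1` coordinates: `(x_L s_L)² ≤ |x'|² |s'|² = |x'|² (s_L² - 1)`.
lemma mink_self_pos_of_orthogonal {s x : Fin (n + 2) → ℝ} (hss : mink n s s = -1)
    (hxs : mink n x s = 0) (hx : x ≠ 0) : 0 < mink n x x := by
  unfold mink at hss hxs ⊢
  set X := ∑ i : Fin (n + 1), x i.castSucc * x i.castSucc
  set S := ∑ i : Fin (n + 1), s i.castSucc * s i.castSucc
  set P := ∑ i : Fin (n + 1), x i.castSucc * s i.castSucc
  set a := x (Fin.last (n + 1))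
  set c := s (Fin.last (n + 1))
  have hCS : P * P ≤ X * S := by
    simpa only [sq] using Finset.sum_mul_sq_le_sq_mul_sq Finset.univ
      (fun i : Fin (n + 1) => x i.castSucc) (fun i => s i.castSucc)
  have hS : 0 ≤ S := Finset.sum_nonneg fun i _ => mul_self_nonneg _
  have hX : 0 < X + a * a := by
    have hdot : 0 < x ⬝ᵥ x :=
      (Finset.sum_nonneg fun i _ => mul_self_nonneg (x i)).lt_of_ne
        (Ne.symm (dotProduct_self_eq_zero.not.2 hx))
    rwa [dotProduct, Fin.sum_univ_castSucc] at hdot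
  have hP : P * P = a * a * (S + 1) := by
    rw [sub_eq_zero.1 hxs, show S + 1 = c * c by linarith]; ring
  by_contra! h
  nlinarith [mul_nonneg (sub_nonneg.2 h) hS, mul_self_nonneg a]

end Minkowski

theorem desingularize_for_small_time_general
    {n : ℕ} {M : Type*} [TopologicalSpace M]
    [ChartedSpace (EuclideanSpace ℝ (Fin n)) M]
    [IsManifold (𝓡 n) (⊤ : ℕ∞) M]
    (σ ν : M → Fin (n + 2) → ℝ)
    (hσ : ContMDiff (𝓡 n) 𝓘(ℝ, Fin (n + 2) → ℝ) (⊤ : ℕ∞) σ)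
    (hν : ContMDiff (𝓡 n) 𝓘(ℝ, Fin (n + 2) → ℝ) (⊤ : ℕ∞) ν)
    (hσσ : ∀ p, mink n (σ p) (σ p) = -1)
    (hσν : ∀ p, mink n (σ p) (ν p) = 0)
    (hζimm : ∀ p, Function.Injective
      (mfderiv (𝓡 n) 𝓘(ℝ, (Fin (n + 2) → ℝ) × (Fin (n + 2) → ℝ))
        (fun q => (σ q, ν q)) p))
    (horth : ∀ p (v : EuclideanSpace ℝ (Fin n)),
      mink n (mfderiv (𝓡 n) 𝓘(ℝ, Fin (n + 2) → ℝ) σ p v) (ν p) =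
        mink n (mfderiv (𝓡 n) 𝓘(ℝ, Fin (n + 2) → ℝ) ν p v) (σ p))
    (p : M) :
    ∃ ε > 0, ∀ t : ℝ, 0 < |t| → |t| < ε →
      Function.Injective (fun v : EuclideanSpace ℝ (Fin n) =>
        letI a : Fin (n + 2) → ℝ := mfderiv (𝓡 n) 𝓘(ℝ, Fin (n + 2) → ℝ) σ p v
        letI b : Fin (n + 2) → ℝ := mfderiv (𝓡 n) 𝓘(ℝ, Fin (n + 2) → ℝ) ν p v
        Real.cosh t • a + Real.sinh t • b) := by
  have hb : ∀ x y, minkL n x y = minkL n y x := mink_comm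
  have hσ2 : ContMDiff (𝓡 n) 𝓘(ℝ, Fin (n + 2) → ℝ) 2 σ := hσ.of_le (WithTop.coe_le_coe.2 le_top)
  have hν1 : ContMDiff (𝓡 n) 𝓘(ℝ, Fin (n + 2) → ℝ) 1 ν := hν.of_le (WithTop.coe_le_coe.2 le_top)
  have hBσ : ∀ u, mink n (mfderiv (𝓡 n) 𝓘(ℝ, Fin (n + 2) → ℝ) ν p u) (σ p) = 0 := fun u =>
    (mink_comm _ _).trans (bilinear_apply_mfderiv_eq_zero hb hσ2 hν1 hσν horth p u)
  have hinj : ∀ u, mfderiv (𝓡 n) 𝓘(ℝ, Fin (n + 2) → ℝ) σ p u = 0 →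
      mfderiv (𝓡 n) 𝓘(ℝ, Fin (n + 2) → ℝ) ν p u = 0 → u = 0 := fun u hA hB => hζimm p <| by
    rw [map_zero]
    exact (mfderiv_prodMk_space_apply ((hσ2.of_le one_le_two).mdifferentiableAt one_ne_zero)
      (hν1.mdifferentiableAt one_ne_zero) u).trans (Prod.ext hA hB)
  let A : EuclideanSpace ℝ (Fin n) →ₗ[ℝ] Fin (n + 2) → ℝ :=
    (mfderiv (𝓡 n) 𝓘(ℝ, Fin (n + 2) → ℝ) σ p).toLinearMap
  let B : EuclideanSpace ℝ (Fin n) →ₗ[ℝ] Fin (n + 2) → ℝ :=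
    (mfderiv (𝓡 n) 𝓘(ℝ, Fin (n + 2) → ℝ) ν p).toLinearMap
  exact exists_pos_injective_cosh_smul_add_sinh_smul (A := A) (B := B)
    (finite_pencilSingularSet (b := (minkL n).toLinearMap₁₂) ⟨hb⟩
      (bilinear_mfderiv_comm hb hσ2 hν1 hσν horth p)
      (fun u hu => (mink_self_pos_of_orthogonal (hσσ p) (hBσ u) hu).ne') hinj)

/-- Let `ζ = (σ,ν) : M → T¹ℍ^{n+1}` be an immersion orthogonal to the generator of the
geodesic flow. If `d_pσ` is not injective at a point `p`, then there is `ε > 0` such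
that for all `t` with `0 < |t| < ε` the differential of the projection to `ℍ^{n+1}` of
`φ_t ∘ ζ`, namely `cosh(t)·d_pσ + sinh(t)·d_pν`, is injective. -/
theorem desingularize_for_small_time
    {n : ℕ} {M : Type*} [TopologicalSpace M]
    [ChartedSpace (EuclideanSpace ℝ (Fin n)) M]
    [IsManifold (𝓡 n) (⊤ : ℕ∞) M]
    (σ ν : M → Fin (n + 2) → ℝ)
    (hσ : ContMDiff (𝓡 n) 𝓘(ℝ, Fin (n + 2) → ℝ) (⊤ : ℕ∞) σ)
    (hν : ContMDiff (𝓡 n) 𝓘(ℝ, Fin (n + 2) → ℝ) (⊤ : ℕ∞) ν)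
    (hσσ : ∀ p, mink n (σ p) (σ p) = -1)
    (hpos : ∀ p, 0 < σ p (Fin.last (n + 1)))
    (hνν : ∀ p, mink n (ν p) (ν p) = 1)
    (hσν : ∀ p, mink n (σ p) (ν p) = 0)
    (hζimm : ∀ p, Function.Injective
      (mfderiv (𝓡 n) 𝓘(ℝ, (Fin (n + 2) → ℝ) × (Fin (n + 2) → ℝ))
        (fun q => (σ q, ν q)) p))
    (horth : ∀ p (v : EuclideanSpace ℝ (Fin n)),
      mink n (mfderiv (𝓡 n) 𝓘(ℝ, Fin (n + 2) → ℝ) σ p v) (ν p) =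
        mink n (mfderiv (𝓡 n) 𝓘(ℝ, Fin (n + 2) → ℝ) ν p v) (σ p))
    (p : M)
    (hsing : ¬ Function.Injective (mfderiv (𝓡 n) 𝓘(ℝ, Fin (n + 2) → ℝ) σ p)) :
    ∃ ε > 0, ∀ t : ℝ, 0 < |t| → |t| < ε →
      Function.Injective (fun v : EuclideanSpace ℝ (Fin n) =>
        letI a : Fin (n + 2) → ℝ := mfderiv (𝓡 n) 𝓘(ℝ, Fin (n + 2) → ℝ) σ p v
        letI b : Fin (n + 2) → ℝ := mfderiv (𝓡 n) 𝓘(ℝ, Fin (n + 2) → ℝ) ν p v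
        Real.cosh t • a + Real.sinh t • b) :=
  desingularize_for_small_time_general σ ν hσ hν hσσ hσν hζimm horth p
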